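/- Let n be even and i ≥ 0 with n ≥ 6i. Then for every k ≥ 1 there is no binary [n, k, n−2i] LCD code. -/

import Mathlib

open Matrix

/-- The dual code of a binary linear code `C ⊆ GF(2)^n` under the standard bilinear form. -/
def dualCode {n : ℕ} (C : Submodule (ZMod 2) (Fin n → ZMod 2)) :
    Submodule (ZMod 2) (Fin n → ZMod 2) where
  carrier := {v | ∀ c ∈ C, v ⬝ᵥ c = 0}
  add_mem' := by
    intro a b ha hb c hc
    simp [add_dotProduct, ha c hc, hb c hc]
  zero_mem' := by
    intro c hc
    simp
  smul_mem' := by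
    intro r a ha c hc
    simp [smul_dotProduct, ha c hc]

/-- A linear code is LCD if it intersects its dual trivially. -/
def isLCD {n : ℕ} (C : Submodule (ZMod 2) (Fin n → ZMod 2)) : Prop :=
  C ⊓ dualCode C = ⊥

/-- `C` has minimum distance `d`: every nonzero codeword has Hamming weight at least `d`,
and some nonzero codeword has Hamming weight exactly `d`. -/
def hasMinDist {n : ℕ} (C : Submodule (ZMod 2) (Fin n → ZMod 2)) (d : ℕ) : Prop :=
  (∀ v ∈ C, v ≠ 0 → d ≤ hammingNorm v) ∧ ∃ v ∈ C, v ≠ 0 ∧ hammingNorm v = d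

/-- `LCDmax n k` is the largest minimum distance among binary `[n,k]` LCD codes. -/
noncomputable def LCDmax (n k : ℕ) : ℕ :=
  sSup {d | ∃ C : Submodule (ZMod 2) (Fin n → ZMod 2),
    Module.finrank (ZMod 2) ↥C = k ∧ hasMinDist C d ∧ isLCD C}

/-!
Let `u` be a codeword of minimum weight `d = n - 2i` and `c` any other nonzero codeword, with
supports meeting in `t` coordinates. From `wt c ≥ d`, `wt (u + c) = d + wt c - 2t ≥ d` and
`d + wt c - t ≤ n` one gets `2d - n ≤ t ≤ n - d`, and `n ≥ 6i` means `2d - n ≥ n - d`,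
so `t = n - d = 2i`. Hence `u ⬝ᵥ c = t` is even, as is `u ⬝ᵥ u = d`, so `u ∈ C ∩ C⊥`.
-/

section BinaryWeights

variable {ι : Type*} [Fintype ι]

theorem hammingNorm_eq_sum_ite (w : ι → ZMod 2) :
    hammingNorm w = ∑ j, if w j = 0 then 0 else 1 := by
  classical
  rw [hammingNorm, Finset.card_filter]
  exact Finset.sum_congr rfl fun j _ => by split_ifs <;> simp_all

theorem sum_eq_hammingNorm (w : ι → ZMod 2) : ∑ j, w j = (hammingNorm w : ZMod 2) := by
  rw [hammingNorm_eq_sum_ite, Nat.cast_sum]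
  have key : ∀ x : ZMod 2, x = ((if x = 0 then 0 else 1 : ℕ) : ZMod 2) := by decide
  exact Finset.sum_congr rfl fun j _ => key (w j)

theorem hammingNorm_add_add_two_mul_hammingNorm_mul (u v : ι → ZMod 2) :
    hammingNorm (u + v) + 2 * hammingNorm (u * v) = hammingNorm u + hammingNorm v := by
  have key : ∀ x y : ZMod 2, ((if x + y = 0 then 0 else 1) + 2 * if x * y = 0 then 0 else 1) =
      (if x = 0 then 0 else 1) + if y = 0 then 0 else 1 := by decide
  simp only [hammingNorm_eq_sum_ite, Finset.mul_sum, ← Finset.sum_add_distrib]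
  exact Finset.sum_congr rfl fun j _ => key (u j) (v j)

theorem hammingNorm_add_hammingNorm_le (u v : ι → ZMod 2) :
    hammingNorm u + hammingNorm v ≤ Fintype.card ι + hammingNorm (u * v) := by
  have key : ∀ x y : ZMod 2, ((if x = 0 then 0 else 1) + if y = 0 then 0 else 1) ≤
      1 + if x * y = 0 then 0 else 1 := by decide
  rw [← Finset.card_univ, Finset.card_eq_sum_ones]
  simp only [hammingNorm_eq_sum_ite, ← Finset.sum_add_distrib]
  exact Finset.sum_le_sum fun j _ => key (u j) (v j)

theorem dotProduct_eq_hammingNorm_mul (u v : ι → ZMod 2) :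
    u ⬝ᵥ v = (hammingNorm (u * v) : ZMod 2) :=
  sum_eq_hammingNorm (u * v)

theorem dotProduct_self_eq_hammingNorm (u : ι → ZMod 2) :
    u ⬝ᵥ u = (hammingNorm u : ZMod 2) := by
  have key : ∀ x : ZMod 2, x * x = x := by decide
  rw [dotProduct_eq_hammingNorm_mul, show u * u = u from funext fun j => key (u j)]

theorem hammingNorm_mul_eq {d : ℕ} {u v : ι → ZMod 2} (hd : 2 * Fintype.card ι ≤ 3 * d)
    (hu : hammingNorm u = d) (hv : d ≤ hammingNorm v) (huv : d ≤ hammingNorm (u + v)) :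
    hammingNorm (u * v) = Fintype.card ι - d := by
  have hsum := hammingNorm_add_add_two_mul_hammingNorm_mul u v
  have hunion := hammingNorm_add_hammingNorm_le u v
  omega

end BinaryWeights

theorem mem_dualCode_of_hammingNorm_eq {n d : ℕ} {C : Submodule (ZMod 2) (Fin n → ZMod 2)}
    (hmin : ∀ v ∈ C, v ≠ 0 → d ≤ hammingNorm v) (hd : 2 * n ≤ 3 * d) (hd_even : Even d)
    (hnd_even : Even (n - d)) {u : Fin n → ZMod 2} (huC : u ∈ C) (hu : hammingNorm u = d) :
    u ∈ dualCode C := by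
  intro v hvC
  rcases eq_or_ne v 0 with rfl | hv0
  · exact dotProduct_zero u
  rcases eq_or_ne v u with rfl | hvu
  · rw [dotProduct_self_eq_hammingNorm, hu, hd_even.natCast_zmod_two]
  have huv : u + v ≠ 0 := fun h =>
    hvu ((eq_neg_of_add_eq_zero_right h).trans (ZModModule.neg_eq_self u))
  rw [dotProduct_eq_hammingNorm_mul,
    hammingNorm_mul_eq (by simpa using hd) hu (hmin v hvC hv0) (hmin _ (C.add_mem huC hvC) huv),
    Fintype.card_fin, hnd_even.natCast_zmod_two]

theorem no_lcd_even_n_general (n i k : ℕ) (hn : Even n) (hni : 6 * i ≤ n) :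
    ¬ ∃ C : Submodule (ZMod 2) (Fin n → ZMod 2),
      Module.finrank (ZMod 2) ↥C = k ∧ hasMinDist C (n - 2 * i) ∧ isLCD C := by
  rintro ⟨C, -, ⟨hmin, u, huC, hu0, hu⟩, hlcd⟩
  have hd_even : Even (n - 2 * i) := hn.tsub (even_two_mul i)
  have hnd_even : Even (n - (n - 2 * i)) := by
    rw [Nat.sub_sub_self (by omega)]; exact even_two_mul i
  have hu_dual := mem_dualCode_of_hammingNorm_eq hmin (by omega) hd_even hnd_even huC hu
  have : u ∈ C ⊓ dualCode C := ⟨huC, hu_dual⟩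
  rw [hlcd, Submodule.mem_bot] at this
  exact hu0 this

/-- Let `n` be even and `i ≥ 0` with `n ≥ 6i`. Then for every `k ≥ 1` there is no binary
`[n, k, n−2i]` LCD code. -/
theorem no_lcd_even_n (n i k : ℕ) (hn : Even n) (hni : 6 * i ≤ n) (hk : 1 ≤ k) :
    ¬ ∃ C : Submodule (ZMod 2) (Fin n → ZMod 2),
      Module.finrank (ZMod 2) ↥C = k ∧ hasMinDist C (n - 2 * i) ∧ isLCD C :=
  no_lcd_even_n_general n i k hn hni
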